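/- arXiv:0811.0966 — 10 statements merged into one kernel-verified Lean document; each statement's English description precedes it below -/
import Mathlib

section
/- Let m and n be positive integers with m > ∏_{p ≤ n, p prime} p^{⌊log_p n⌋}. Then the binomial coefficient C(m+n, n) admits a Grimm factorization, i.e., there exist positive integers a_1, ..., a_n with C(m+n, n) = a_1 ⋯ a_n, a_i dividing m+i and a_i > 1 for each 1 ≤ i ≤ n, and gcd(a_i, a_j) = 1 for all 1 ≤ i ≠ j ≤ n. -/
/-!
Write `N = C(m+n, n)`. By Kummer's theorem `v_p(N)` counts the carries when `m` and `n` are added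
in base `p`, and a carry at level `k` forces some `m + i` (`1 ≤ i ≤ n`) to be divisible by `p^k`;
hence `v_p(N) ≤ max_i v_p(m+i)`. Sending every prime `p ∣ N` to an index `i` at which
`v_p(m+i)` is maximal splits `N` into pairwise coprime factors `a_i ∣ m + i`.

Each `a_i` is nontrivial: as `m + i` exceeds `lcm(1, …, n) = ∏_{p ≤ n} p^⌊log_p n⌋`, some prime
power `p^k > n` divides `m + i`. It divides no other term of the window `(m, m+n]`, so `i` is the
index chosen for `p`, and it produces a carry at level `k`, so `p ∣ N`.
-/

open Finset

namespace Nat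

section Window

variable {m n q i j : ℕ}

-- `q ≤ n % q + m % q` is the carry condition appearing in `Nat.factorization_choose'`.
theorem exists_dvd_add_of_le_mod_add_mod (hq : 0 < q) (h : q ≤ n % q + m % q) :
    ∃ i ∈ Icc 1 n, q ∣ m + i := by
  have hmq := mod_lt m hq
  have hm := div_add_mod m q
  have hn := mod_le n q
  refine ⟨q - m % q, mem_Icc.2 ⟨by omega, by omega⟩, m / q + 1, ?_⟩
  rw [mul_add_one]
  omega

theorem le_mod_add_mod_of_dvd_add (hnq : n < q) (hi : i ∈ Icc 1 n) (hdvd : q ∣ m + i) :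
    q ≤ n % q + m % q := by
  rw [mem_Icc] at hi
  rw [mod_eq_of_lt hnq]
  by_contra! hlt
  have hmod : (m + i) % q = m % q + i := by
    rw [add_mod, mod_eq_of_lt (show i < q by omega), mod_eq_of_lt (by omega)]
  have := mod_eq_zero_of_dvd hdvd
  omega

theorem eq_of_dvd_add_of_dvd_add (hnq : n < q) (hi : i ∈ Icc 1 n) (hj : j ∈ Icc 1 n)
    (hqi : q ∣ m + i) (hqj : q ∣ m + j) : i = j := by
  rw [mem_Icc] at hi hj
  exact ModEq.eq_of_lt_of_lt
    (ModEq.add_left_cancel' m ((modEq_zero_iff_dvd.2 hqi).trans (modEq_zero_iff_dvd.2 hqj).symm))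
    (by omega) (by omega)

end Window

section Valuation

variable {p m n i j e : ℕ}

theorem factorization_choose_le_of_forall_le (hp : p.Prime)
    (he : ∀ i ∈ Icc 1 n, (m + i).factorization p ≤ e) :
    (choose (m + n) n).factorization p ≤ e := by
  rw [factorization_choose' hp (lt_succ_self _)]
  calc #{k ∈ Ico 1 (log p (m + n) + 1) | p ^ k ≤ n % p ^ k + m % p ^ k}
      ≤ #(Icc 1 e) := card_le_card fun k hk => ?_
    _ = e := by simp
  rw [mem_filter, mem_Ico] at hk
  obtain ⟨i, hi, hdvd⟩ := exists_dvd_add_of_le_mod_add_mod (pow_pos hp.pos k) hk.2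
  have hk_le := (hp.pow_dvd_iff_le_factorization (by grind)).1 hdvd
  exact mem_Icc.2 ⟨hk.1.1, hk_le.trans (he i hi)⟩

theorem eq_of_log_lt_factorization (hp : p.Prime) (hi : i ∈ Icc 1 n) (hj : j ∈ Icc 1 n)
    (hpi : log p n < (m + i).factorization p) (hpj : log p n < (m + j).factorization p) :
    i = j :=
  eq_of_dvd_add_of_dvd_add (lt_pow_succ_log_self hp.one_lt n) hi hj
    ((pow_dvd_pow p hpi).trans (ordProj_dvd _ p)) ((pow_dvd_pow p hpj).trans (ordProj_dvd _ p))

theorem prime_dvd_choose_of_log_lt_factorization (hp : p.Prime) (hi : i ∈ Icc 1 n)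
    (h : log p n < (m + i).factorization p) : p ∣ choose (m + n) n := by
  have hi' := mem_Icc.1 hi
  have hdvd : p ^ (log p n + 1) ∣ m + i := (pow_dvd_pow p h).trans (ordProj_dvd _ p)
  have hcarry := le_mod_add_mod_of_dvd_add (lt_pow_succ_log_self hp.one_lt n) hi hdvd
  have hk : log p n + 1 ≤ log p (m + n) :=
    le_log_of_pow_le hp.one_lt ((le_of_dvd (by omega) hdvd).trans (by omega))
  rw [hp.dvd_iff_one_le_factorization (choose_pos (le_add_left n m)).ne',
    factorization_choose' hp (lt_succ_self _), one_le_card]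
  exact ⟨log p n + 1, mem_filter.2 ⟨mem_Ico.2 ⟨by omega, by omega⟩, hcarry⟩⟩

end Valuation

theorem dvd_prod_pow_log_of_factorization_le {x n : ℕ} (hx : x ≠ 0)
    (h : ∀ p, p.Prime → x.factorization p ≤ log p n) :
    x ∣ ∏ p ∈ range (n + 1) with p.Prime, p ^ log p n := by
  calc x = ∏ p ∈ x.primeFactors, p ^ x.factorization p := prod_primeFactors_pow_factorization hx
    _ ∣ ∏ p ∈ x.primeFactors, p ^ log p n :=
      prod_dvd_prod_of_dvd _ _ fun p hp => pow_dvd_pow p (h p (prime_of_mem_primeFactors hp))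
    _ ∣ ∏ p ∈ range (n + 1) with p.Prime, p ^ log p n := by
      refine prod_dvd_prod_of_subset _ _ _ fun p hp => ?_
      have hpp := prime_of_mem_primeFactors hp
      have hlog : 0 < log p n :=
        (hpp.factorization_pos_of_dvd hx (dvd_of_mem_primeFactors hp)).trans_le (h p hpp)
      exact mem_filter.2 ⟨mem_range.2 (lt_succ_of_le (log_pos_iff.1 hlog).1), hpp⟩

theorem exists_log_lt_factorization_of_prod_lt {x n : ℕ}
    (hx : ∏ p ∈ range (n + 1) with p.Prime, p ^ log p n < x) :
    ∃ p, p.Prime ∧ log p n < x.factorization p := by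
  by_contra! h
  have hpos : 0 < ∏ p ∈ range (n + 1) with p.Prime, p ^ log p n :=
    prod_pos fun p hp => pow_pos (mem_filter.1 hp).2.pos _
  exact (le_of_dvd hpos (dvd_prod_pow_log_of_factorization_le (by omega) h)).not_gt hx

def fiberFactor (N : ℕ) (I : ℕ → ℕ) (i : ℕ) : ℕ :=
  ∏ p ∈ N.primeFactors with I p = i, p ^ N.factorization p

section FiberFactor

variable {N : ℕ} {I : ℕ → ℕ} {i j : ℕ}

theorem prod_fiberFactor {s : Finset ℕ} (hN : N ≠ 0) (hI : ∀ p ∈ N.primeFactors, I p ∈ s) :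
    ∏ i ∈ s, fiberFactor N I i = N := by
  unfold fiberFactor
  rw [prod_fiberwise_of_maps_to hI (fun p => p ^ N.factorization p)]
  exact (prod_primeFactors_pow_factorization hN).symm

theorem coprime_fiberFactor (hij : i ≠ j) : Coprime (fiberFactor N I i) (fiberFactor N I j) := by
  refine coprime_prod_left_iff.2 fun p hp => coprime_prod_right_iff.2 fun q hq => ?_
  rw [mem_filter] at hp hq
  have hpq : p ≠ q := by
    rintro rfl
    exact hij (hp.2.symm.trans hq.2)
  exact Coprime.pow _ _ ((coprime_primes (prime_of_mem_primeFactors hp.1)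
    (prime_of_mem_primeFactors hq.1)).2 hpq)

theorem fiberFactor_dvd {x : ℕ} (hx : x ≠ 0)
    (h : ∀ p ∈ N.primeFactors, I p = i → N.factorization p ≤ x.factorization p) :
    fiberFactor N I i ∣ x := by
  have hsub : {p ∈ N.primeFactors | I p = i} ⊆ x.primeFactors := fun p hp => by
    rw [mem_filter] at hp
    have hpp := prime_of_mem_primeFactors hp.1
    have hpos := h p hp.1 hp.2
    have hN : N.factorization p ≠ 0 := Finsupp.mem_support_iff.1 hp.1
    exact mem_primeFactors.2 ⟨hpp, dvd_of_factorization_pos (by omega), hx⟩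
  calc fiberFactor N I i ∣ ∏ p ∈ N.primeFactors with I p = i, p ^ x.factorization p :=
        prod_dvd_prod_of_dvd _ _ fun p hp =>
          pow_dvd_pow p (h p (mem_filter.1 hp).1 (mem_filter.1 hp).2)
    _ ∣ ∏ p ∈ x.primeFactors, p ^ x.factorization p := prod_dvd_prod_of_subset _ _ _ hsub
    _ = x := (prod_primeFactors_pow_factorization hx).symm

theorem one_lt_fiberFactor {p : ℕ} (hp : p ∈ N.primeFactors) (hI : I p = i) :
    1 < fiberFactor N I i := by
  have hpos : 0 < fiberFactor N I i :=
    prod_pos fun q hq => pow_pos (prime_of_mem_primeFactors (mem_filter.1 hq).1).pos _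
  have hdvd : p ∣ fiberFactor N I i :=
    (dvd_pow_self p (Finsupp.mem_support_iff.1 hp)).trans
      (dvd_prod_of_mem _ (mem_filter.2 ⟨hp, hI⟩))
  exact (prime_of_mem_primeFactors hp).one_lt.trans_le (le_of_dvd hpos hdvd)

end FiberFactor

end Nat

theorem grimm_factorization_of_large_general
    (m n : ℕ) (hn : 0 < n)
    (h : m > ∏ p ∈ Finset.filter Nat.Prime (Finset.range (n + 1)),
      p ^ ⌊Real.logb (p : ℝ) (n : ℝ)⌋₊) :
    ∃ a : ℕ → ℕ,
      Nat.choose (m + n) n = ∏ i ∈ Finset.Icc 1 n, a i ∧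
      (∀ i ∈ Finset.Icc 1 n, a i ∣ (m + i) ∧ 1 < a i) ∧
      (∀ i ∈ Finset.Icc 1 n, ∀ j ∈ Finset.Icc 1 n, i ≠ j →
        Nat.Coprime (a i) (a j)) := by
  simp only [Real.natFloor_logb_natCast] at h
  have hN : Nat.choose (m + n) n ≠ 0 := (Nat.choose_pos (Nat.le_add_left n m)).ne'
  choose I hI hImax using fun p => exists_max_image (Icc 1 n) (fun i => (m + i).factorization p)
    (nonempty_Icc.2 hn)
  refine ⟨Nat.fiberFactor (Nat.choose (m + n) n) I, (Nat.prod_fiberFactor hN fun p _ => hI p).symm,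
    fun i hi => ⟨Nat.fiberFactor_dvd (by omega) fun p hp hpi => ?_, ?_⟩,
    fun i _ j _ hij => Nat.coprime_fiberFactor hij⟩
  · exact hpi ▸ Nat.factorization_choose_le_of_forall_le (Nat.prime_of_mem_primeFactors hp)
      (hImax p)
  · obtain ⟨p, hp, hlog⟩ := Nat.exists_log_lt_factorization_of_prod_lt
      (h.trans_le (Nat.le_add_right m i))
    have hpN : p ∈ (Nat.choose (m + n) n).primeFactors :=
      Nat.mem_primeFactors.2 ⟨hp, Nat.prime_dvd_choose_of_log_lt_factorization hp hi hlog, hN⟩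
    exact Nat.one_lt_fiberFactor hpN (Nat.eq_of_log_lt_factorization hp (hI p) hi
      (hlog.trans_le (hImax p i hi)) hlog)

/-- **Theorem 1 of the paper.** If `m > ∏_{p ≤ n, p prime} p^⌊log_p n⌋`, then the
binomial coefficient `C(m+n, n)` admits a Grimm factorization. -/
theorem grimm_factorization_of_large
    (m n : ℕ) (hm : 0 < m) (hn : 0 < n)
    (h : m > ∏ p ∈ Finset.filter Nat.Prime (Finset.range (n + 1)),
      p ^ ⌊Real.logb (p : ℝ) (n : ℝ)⌋₊) :
    ∃ a : ℕ → ℕ,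
      Nat.choose (m + n) n = ∏ i ∈ Finset.Icc 1 n, a i ∧
      (∀ i ∈ Finset.Icc 1 n, a i ∣ (m + i) ∧ 1 < a i) ∧
      (∀ i ∈ Finset.Icc 1 n, ∀ j ∈ Finset.Icc 1 n, i ≠ j →
        Nat.Coprime (a i) (a j)) :=
  grimm_factorization_of_large_general m n hn h
end

section
/- Let m and n be positive integers and let p be any prime. Then v_p(C(m+n, n)) ≤ max_{1 ≤ i ≤ n} v_p(m+i), where C(m+n, n) is the binomial coefficient. -/
/-! By Kummer's theorem `v_p(C(m+n, n))` counts the carries `i ≥ 1` in the base-`p` addition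
of `m` and `n`. A carry at position `i` means `p^i - (m mod p^i) ≤ n mod p^i ≤ n`, so `p^i`
divides some `m + j` with `1 ≤ j ≤ n`; hence every carry position is at most the right-hand
side, and so is their number. -/

open Finset

theorem Nat.exists_mem_Icc_dvd_add_of_le_mod_add_mod {d m n : ℕ} (hd : 0 < d)
    (hcarry : d ≤ n % d + m % d) : ∃ j ∈ Icc 1 n, d ∣ m + j := by
  have hmod : m % d < d := Nat.mod_lt m hd
  refine ⟨d - m % d, mem_Icc.mpr ⟨by omega, by have := Nat.mod_le n d; omega⟩, ?_⟩
  have hsum : m + (d - m % d) = d * (m / d + 1) := by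
    have := Nat.div_add_mod m d
    rw [Nat.mul_succ]
    omega
  exact hsum ▸ dvd_mul_right d _

theorem Nat.card_le_of_subset_Icc_one {s : Finset ℕ} {N : ℕ} (h : s ⊆ Icc 1 N) : #s ≤ N :=
  (card_le_card h).trans (by simp)

theorem factorization_choose_le_sup_general
    (m n : ℕ) (p : ℕ) (hp : p.Prime) :
    (Nat.choose (m + n) n).factorization p ≤
      (Finset.Icc 1 n).sup (fun i => (m + i).factorization p) := by
  rw [Nat.factorization_choose' hp (Nat.lt_succ_self _)]
  refine Nat.card_le_of_subset_Icc_one fun i hi => ?_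
  obtain ⟨hi, hcarry⟩ := mem_filter.mp hi
  refine mem_Icc.mpr ⟨(mem_Ico.mp hi).1, ?_⟩
  obtain ⟨j, hj, hdvd⟩ :=
    Nat.exists_mem_Icc_dvd_add_of_le_mod_add_mod (pow_pos hp.pos i) hcarry
  have hj1 : 1 ≤ j := (mem_Icc.mp hj).1
  calc i ≤ (m + j).factorization p := (hp.pow_dvd_iff_le_factorization (by omega)).mp hdvd
    _ ≤ _ := le_sup (f := fun i => (m + i).factorization p) hj

/-- **Lemma 1.** For any prime `p`, `v_p(C(m+n, n)) ≤ max_{1 ≤ i ≤ n} v_p(m+i)`. -/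
theorem factorization_choose_le_sup
    (m n : ℕ) (hm : 0 < m) (hn : 0 < n) (p : ℕ) (hp : p.Prime) :
    (Nat.choose (m + n) n).factorization p ≤
      (Finset.Icc 1 n).sup (fun i => (m + i).factorization p) :=
  factorization_choose_le_sup_general m n p hp
end

section
/- Let m and n be positive integers, let 1 ≤ i ≤ n, and let p be a prime with p^{v_p(m+i)} > n. Then for every 1 ≤ j ≤ n with j ≠ i, one has v_p(m+j) < v_p(m+i); in particular v_p(m+i) = max_{1 ≤ r ≤ n} v_p(m+r). -/
/-- If `p^{v_p(m+i)} > n` for some `1 ≤ i ≤ n`, then `v_p(m+j) < v_p(m+i)` for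
every `1 ≤ j ≤ n` with `j ≠ i`; in particular `v_p(m+i)` attains the maximum. -/
theorem factorization_lt_of_pow_factorization_gt
    (m n i : ℕ) (hm : 0 < m) (hi : i ∈ Finset.Icc 1 n)
    (p : ℕ) (hp : p.Prime)
    (h : p ^ ((m + i).factorization p) > n) :
    (∀ j ∈ Finset.Icc 1 n, j ≠ i →
      (m + j).factorization p < (m + i).factorization p) ∧
    (m + i).factorization p =
      (Finset.Icc 1 n).sup (fun r => (m + r).factorization p) := by
  obtain ⟨hi1, hin⟩ := Finset.mem_Icc.mp hi
  set e := (m + i).factorization p with he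
  have hdvd_i : p ^ e ∣ m + i := Nat.ordProj_dvd _ _
  have main : ∀ j ∈ Finset.Icc 1 n, j ≠ i → (m + j).factorization p < e := by
    intro j hj hne
    obtain ⟨hj1, hjn⟩ := Finset.mem_Icc.mp hj
    by_contra hle
    push_neg at hle
    have hdvd_j : p ^ e ∣ m + j :=
      dvd_trans (pow_dvd_pow p hle) (Nat.ordProj_dvd _ _)
    have hz : ((p : ℤ)) ^ e ∣ (j : ℤ) - (i : ℤ) := by
      have h1 : ((p : ℤ)) ^ e ∣ ((m + j : ℕ) : ℤ) := by exact_mod_cast hdvd_j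
      have h2 : ((p : ℤ)) ^ e ∣ ((m + i : ℕ) : ℤ) := by exact_mod_cast hdvd_i
      have := dvd_sub h1 h2
      push_cast at this
      simpa using this
    have hne' : (j : ℤ) - (i : ℤ) ≠ 0 := by
      intro hc; apply hne; omega
    have hle' : (p : ℤ) ^ e ≤ |(j : ℤ) - (i : ℤ)| :=
      Int.le_of_dvd (abs_pos.mpr hne') ((dvd_abs _ _).mpr hz)
    have habs : |(j : ℤ) - (i : ℤ)| ≤ (n : ℤ) := by
      rw [abs_le]; omega
    have : (p : ℤ) ^ e ≤ (n : ℤ) := le_trans hle' habs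
    have : p ^ e ≤ n := by exact_mod_cast this
    omega
  refine ⟨main, le_antisymm (Finset.le_sup (f := fun r => (m + r).factorization p) hi) (Finset.sup_le ?_)⟩
  intro j hj
  by_cases hji : j = i
  · subst hji; exact le_rfl
  · exact (main j hj hji).le
end

section
/- Let m and n be positive integers and suppose that for some 1 ≤ i ≤ n the number m+i is composite and m+i ∉ H_n. Then there is a prime p such that p^{v_p(m+i)} > n, and for any such prime p one has 1 ≤ v_p(C(m+n, n)) ≤ v_p(m+i). -/
/-!
Let `e = v_p(m + i)` with `p ^ e > n ≥ i`. By Kummer's theorem `v_p(C(m+n, n))` is the number of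
carries when adding `n` and `m` in base `p`. At a level `p ^ j` with `j ≥ e` we have `n < p ^ j`,
so a carry happens there exactly when `(m, m + n]` contains a multiple of `p ^ j`; any such multiple
is divisible by `p ^ e > n`, hence can only be `m + i`. So there is a carry at level `e` and none
above it, which gives `1 ≤ v_p(C(m+n, n)) ≤ e`.
-/

/-- `H n` is the set of composite positive integers `x` such that
`p^{v_p(x)} ≤ n` for every prime `p` dividing `x`. -/
def Hset (n : ℕ) : Set ℕ :=
  {x | 1 < x ∧ ¬ x.Prime ∧ ∀ p : ℕ, p.Prime → p ∣ x → p ^ (x.factorization p) ≤ n}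

namespace Nat

theorem le_mod_add_mod_iff_dvd_add {a d m n i : ℕ} (hd : d ≠ 0) (had : a ∣ d) (hai : a ∣ m + i)
    (hi : 0 < i) (hin : i ≤ n) (hna : n < a) :
    d ≤ n % d + m % d ↔ d ∣ m + i := by
  have had' : a ≤ d := Nat.le_of_dvd (Nat.pos_of_ne_zero hd) had
  have hmd : m % d < d := Nat.mod_lt m (Nat.pos_of_ne_zero hd)
  have hmod : (m + i) % d = (m % d + i) % d := by
    rw [Nat.add_mod, Nat.mod_eq_of_lt (by omega : i < d)]
  have har : a ∣ (m % d + i) % d := hmod ▸ (Nat.dvd_mod_iff had).2 hai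
  rw [Nat.mod_eq_of_lt (by omega : n < d), Nat.dvd_iff_mod_eq_zero, hmod]
  rcases lt_or_ge (m % d + i) d with hlt | hge
  · rw [Nat.mod_eq_of_lt hlt] at har ⊢
    -- `a` divides both `d` and `m % d + i < d`, so the gap between them is at least `a > n`.
    have hgap : a ≤ d - (m % d + i) := Nat.le_of_dvd (by omega) (Nat.dvd_sub had har)
    omega
  · have hwrap : (m % d + i) % d = m % d + i - d := by
      rw [Nat.mod_eq_sub_mod hge, Nat.mod_eq_of_lt (by omega)]
    rw [hwrap] at har ⊢
    have hzero := Nat.eq_zero_of_dvd_of_lt har (by omega)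
    omega

theorem factorization_choose_add_bounds {p m n i : ℕ} (hp : p.Prime) (hi : 0 < i) (hin : i ≤ n)
    (hn : n < p ^ (m + i).factorization p) :
    1 ≤ (choose (m + n) n).factorization p ∧
      (choose (m + n) n).factorization p ≤ (m + i).factorization p := by
  set e := (m + i).factorization p
  have hmi : m + i ≠ 0 := by omega
  have he : e ≠ 0 := by
    rintro he
    rw [he, pow_zero] at hn
    omega
  have heb : e < log p (m + n) + 1 :=
    lt_succ_of_le <| le_log_of_pow_le hp.one_lt <| (ordProj_le p hmi).trans (by omega)
  have carry_iff (j : ℕ) (hj : e ≤ j) : p ^ j ≤ n % p ^ j + m % p ^ j ↔ j = e := by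
    rw [le_mod_add_mod_iff_dvd_add (pow_ne_zero j hp.ne_zero) (pow_dvd_pow p hj)
      (ordProj_dvd _ _) hi hin hn, hp.pow_dvd_iff_le_factorization hmi]
    omega
  rw [factorization_choose' hp (lt_succ_self _)]
  constructor
  · exact Finset.card_pos.2
      ⟨e, Finset.mem_filter.2 ⟨Finset.mem_Ico.2 ⟨by omega, heb⟩, (carry_iff e le_rfl).2 rfl⟩⟩
  · calc _ ≤ (Finset.Icc 1 e).card := Finset.card_le_card fun j hj => by
          obtain ⟨hj, hcarry⟩ := Finset.mem_filter.1 hj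
          refine Finset.mem_Icc.2 ⟨(Finset.mem_Ico.1 hj).1, ?_⟩
          exact (le_total j e).elim id fun hej => ((carry_iff j hej).1 hcarry).le
      _ = e := by simp

end Nat

theorem exists_prime_pow_gt_and_factorization_choose_general
    (m n i : ℕ) (hi : i ∈ Finset.Icc 1 n)
    (hcomp : 1 < m + i ∧ ¬ (m + i).Prime) (hH : m + i ∉ Hset n) :
    (∃ p : ℕ, p.Prime ∧ p ^ ((m + i).factorization p) > n) ∧
    (∀ p : ℕ, p.Prime → p ^ ((m + i).factorization p) > n →
      1 ≤ (Nat.choose (m + n) n).factorization p ∧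
      (Nat.choose (m + n) n).factorization p ≤ (m + i).factorization p) := by
  obtain ⟨hi1, hin⟩ := Finset.mem_Icc.1 hi
  refine ⟨?_, fun p hp hgt => Nat.factorization_choose_add_bounds hp hi1 hin hgt⟩
  by_contra! hsmall
  exact hH ⟨hcomp.1, hcomp.2, fun p hp _ => hsmall p hp⟩

/-- **Lemma 2.** If `m+i` is composite and `m+i ∉ H_n` for some `1 ≤ i ≤ n`, then
there is a prime `p` with `p^{v_p(m+i)} > n`, and for any such prime,
`1 ≤ v_p(C(m+n,n)) ≤ v_p(m+i)`. -/
theorem exists_prime_pow_gt_and_factorization_choose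
    (m n i : ℕ) (hm : 0 < m) (hi : i ∈ Finset.Icc 1 n)
    (hcomp : 1 < m + i ∧ ¬ (m + i).Prime) (hH : m + i ∉ Hset n) :
    (∃ p : ℕ, p.Prime ∧ p ^ ((m + i).factorization p) > n) ∧
    (∀ p : ℕ, p.Prime → p ^ ((m + i).factorization p) > n →
      1 ≤ (Nat.choose (m + n) n).factorization p ∧
      (Nat.choose (m + n) n).factorization p ≤ (m + i).factorization p) :=
  exists_prime_pow_gt_and_factorization_choose_general m n i hi hcomp hH
end

section
/- Let m and n be positive integers, let 1 ≤ i ≤ n, let p be a prime, and set e = v_p(m+i). If p^e > n, then ⌊(m+n)/p^e⌋ − ⌊m/p^e⌋ = 1; consequently p divides the binomial coefficient C(m+n, n). -/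
/-- If `e = v_p(m+i)` satisfies `p^e > n` for some `1 ≤ i ≤ n`, then
`⌊(m+n)/p^e⌋ − ⌊m/p^e⌋ = 1`; consequently `p` divides `C(m+n, n)`. -/
theorem floor_div_sub_eq_one_and_dvd_choose
    (m n i : ℕ) (hm : 0 < m) (hi : i ∈ Finset.Icc 1 n)
    (p : ℕ) (hp : p.Prime) (e : ℕ) (he : e = (m + i).factorization p)
    (h : p ^ e > n) :
    (m + n) / p ^ e - m / p ^ e = 1 ∧ p ∣ Nat.choose (m + n) n := by
  simp only [Finset.mem_Icc] at hi
  obtain ⟨hi1, hin⟩ := hi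
  set q := p ^ e with hq
  have hq0 : 0 < q := pow_pos hp.pos e
  have hdvd : q ∣ m + i := by
    rw [hq, he]; exact Nat.ordProj_dvd _ _
  -- m % q = q - i
  have hmod : m % q = q - i := by
    have h1 : q ∣ m % q + i := by
      have h2 : (m % q + i) % q = 0 := by
        rw [Nat.mod_add_mod]
        exact Nat.mod_eq_zero_of_dvd hdvd
      exact Nat.dvd_of_mod_eq_zero h2
    obtain ⟨c, hc⟩ := h1
    have hmq : m % q < q := Nat.mod_lt _ hq0
    have hc1 : 1 ≤ c := by
      rcases Nat.eq_zero_or_pos c with rfl | hc0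
      · simp at hc; omega
      · exact hc0
    have hc2 : c < 2 := by
      by_contra hc2
      push_neg at hc2
      have : q * 2 ≤ q * c := Nat.mul_le_mul_left q hc2
      omega
    have : c = 1 := by omega
    subst this
    omega
  obtain ⟨k, hk⟩ := hdvd
  have hk1 : 1 ≤ k := by
    rcases Nat.eq_zero_or_pos k with rfl | h0
    · simp at hk; omega
    · exact h0
  -- floor computations
  have hdiv1 : (m + n) / q = k := by
    have hmn : m + n = q * k + (n - i) := by omega
    rw [hmn, Nat.mul_add_div hq0, Nat.div_eq_of_lt (by omega)]
    omega
  have hdiv2 : m / q = k - 1 := by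
    have hB : q * (k - 1) + q = q * k := by
      rcases k with _ | k'
      · omega
      · simp [Nat.mul_succ]
    have hmeq : m = q * (k - 1) + (q - i) := by omega
    rw [hmeq, Nat.mul_add_div hq0, Nat.div_eq_of_lt (by omega)]
    omega
  constructor
  · omega
  · -- Kummer's theorem: carry at digit e
    have he1 : 1 ≤ e := by
      rcases Nat.eq_zero_or_pos e with rfl | h0
      · simp [hq] at h; omega
      · exact h0
    have hqle : q ≤ m + n := le_trans (Nat.le_of_dvd (by omega) ⟨k, hk⟩) (by omega)
    have helog : e < Nat.log p (m + n) + 1 :=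
      Nat.lt_succ_of_le (Nat.le_log_of_pow_le hp.one_lt (hq ▸ hqle))
    have hmul := Nat.Prime.emultiplicity_choose' (p := p) (n := m) (k := n)
      (b := Nat.log p (m + n) + 1) hp (Nat.lt_succ_self _)
    have hmem : e ∈ Finset.filter (fun j => p ^ j ≤ n % p ^ j + m % p ^ j)
        (Finset.Ico 1 (Nat.log p (m + n) + 1)) := by
      simp only [Finset.mem_filter, Finset.mem_Ico]
      refine ⟨⟨he1, by omega⟩, ?_⟩
      rw [← hq, hmod, Nat.mod_eq_of_lt h]
      omega
    have hcard : 1 ≤ (Finset.filter (fun j => p ^ j ≤ n % p ^ j + m % p ^ j)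
        (Finset.Ico 1 (Nat.log p (m + n) + 1))).card :=
      Finset.card_pos.mpr ⟨e, hmem⟩
    have : (1 : ℕ∞) ≤ emultiplicity p (Nat.choose (m + n) n) := by
      rw [hmul]
      exact_mod_cast hcard
    have hpd : p ^ 1 ∣ Nat.choose (m + n) n := pow_dvd_of_le_emultiplicity this
    simpa using hpd
end

section
/- For all positive integers m and n, there exist positive integers a_1, ..., a_n such that C(m+n, n) = a_1 ⋯ a_n, a_i divides m+i for each 1 ≤ i ≤ n, and gcd(a_i, a_j) = 1 for all 1 ≤ i ≠ j ≤ n (here the a_i are allowed to equal 1). -/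
/-! By Kummer's theorem, `k = v_p (C(m+n, n))` is the number of carries when adding `m` and `n`
in base `p`. If the highest carry happens at digit `s`, then `s ≥ k` and `p ^ s` divides some
`m + i` with `1 ≤ i ≤ n`. Sending every prime power `p ^ k ∥ C(m+n, n)` to such an index `i` and
letting `a_i` be the product of the prime powers sent to `i` gives the factorization. -/

open Finset Function

namespace Nat

theorem prod_dvd_of_pairwise_coprime {ι : Type*} {s : Finset ι} {f : ι → ℕ} {n : ℕ}
    (hs : (s : Set ι).Pairwise (Coprime on f)) (hf : ∀ i ∈ s, f i ∣ n) : ∏ i ∈ s, f i ∣ n := by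
  have hs' : (s : Set ι).Pairwise (IsCoprime on fun i => (f i : ℤ)) :=
    hs.mono' fun _ _ h => Nat.isCoprime_iff_coprime.2 h
  exact_mod_cast Finset.prod_dvd_of_coprime hs' fun i hi => Int.natCast_dvd_natCast.2 (hf i hi)

theorem exists_prod_eq_of_pow_factorization_dvd {ι : Type*} {s : Finset ι} {N : ℕ} (hN : N ≠ 0)
    {f : ι → ℕ} (F : ℕ → ι) (hFs : ∀ p ∈ N.primeFactors, F p ∈ s)
    (hF : ∀ p ∈ N.primeFactors, p ^ N.factorization p ∣ f (F p)) :
    ∃ a : ι → ℕ, N = ∏ i ∈ s, a i ∧ (∀ i ∈ s, a i ∣ f i) ∧ (∀ i, 0 < a i) ∧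
      Pairwise (Coprime on a) := by
  classical
  have hcop : (N.primeFactors : Set ℕ).Pairwise (Coprime on fun p => p ^ N.factorization p) :=
    fun p hp q hq hpq =>
      coprime_pow_primes _ _ (prime_of_mem_primeFactors hp) (prime_of_mem_primeFactors hq) hpq
  refine ⟨fun i => ∏ p ∈ N.primeFactors with F p = i, p ^ N.factorization p, ?_, ?_, ?_, ?_⟩
  · rw [prod_fiberwise_of_maps_to hFs]
    exact prod_primeFactors_pow_factorization hN
  · refine fun i _ => prod_dvd_of_pairwise_coprime
      (hcop.mono (coe_subset.2 (filter_subset _ _))) fun p hp => ?_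
    obtain ⟨hpN, rfl⟩ := mem_filter.1 hp
    exact hF p hpN
  · exact fun i => prod_pos fun p hp =>
      pow_pos (prime_of_mem_primeFactors (mem_filter.1 hp).1).pos _
  · intro i j hij
    refine Coprime.prod_left fun p hp => Coprime.prod_right fun q hq => ?_
    obtain ⟨hpN, rfl⟩ := mem_filter.1 hp
    obtain ⟨hqN, rfl⟩ := mem_filter.1 hq
    exact hcop hpN hqN fun hpq => hij (hpq ▸ rfl)

theorem exists_mem_Icc_dvd_add_of_le_mod_add_mod_s8 {d m n : ℕ} (hd : 0 < d)
    (h : d ≤ n % d + m % d) : ∃ i ∈ Icc 1 n, d ∣ m + i := by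
  have hmod : m % d < d := mod_lt m hd
  refine ⟨d - m % d, mem_Icc.2 ⟨by omega, by have := mod_le n d; omega⟩, ?_⟩
  refine ⟨m / d + 1, ?_⟩
  have := div_add_mod m d
  rw [mul_add, mul_one]
  omega

theorem exists_le_pow_le_mod_add_mod_of_factorization_choose_ne_zero {p m n : ℕ} (hp : p.Prime)
    (h : (choose (m + n) n).factorization p ≠ 0) :
    ∃ s, (choose (m + n) n).factorization p ≤ s ∧ p ^ s ≤ n % p ^ s + m % p ^ s := by
  set S := {i ∈ Ico 1 (log p (m + n) + 1) | p ^ i ≤ n % p ^ i + m % p ^ i}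
  have hcard : (choose (m + n) n).factorization p = #S := factorization_choose' hp (lt_succ_self _)
  have hne : S.Nonempty := Finset.card_pos.1 (by omega)
  refine ⟨S.max' hne, ?_, (mem_filter.1 (S.max'_mem hne)).2⟩
  have hsub : S ⊆ Icc 1 (S.max' hne) := fun i hi =>
    mem_Icc.2 ⟨(mem_Ico.1 (mem_filter.1 hi).1).1, S.le_max' i hi⟩
  simpa [hcard] using card_le_card hsub

theorem exists_mem_Icc_pow_factorization_choose_dvd {p m n : ℕ}
    (hp : p ∈ (choose (m + n) n).primeFactors) :
    ∃ i ∈ Icc 1 n, p ^ (choose (m + n) n).factorization p ∣ m + i := by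
  have hk : (choose (m + n) n).factorization p ≠ 0 :=
    Finsupp.mem_support_iff.1 (support_factorization _ ▸ hp)
  have hpp := prime_of_mem_primeFactors hp
  obtain ⟨s, hks, hs⟩ := exists_le_pow_le_mod_add_mod_of_factorization_choose_ne_zero hpp hk
  obtain ⟨i, hi, hdvd⟩ := exists_mem_Icc_dvd_add_of_le_mod_add_mod_s8 (pow_pos hpp.pos s) hs
  exact ⟨i, hi, (pow_dvd_pow p hks).trans hdvd⟩

end Nat

theorem choose_eq_prod_coprime_divisors_general
    (m n : ℕ) :
    ∃ a : ℕ → ℕ,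
      Nat.choose (m + n) n = ∏ i ∈ Finset.Icc 1 n, a i ∧
      (∀ i ∈ Finset.Icc 1 n, a i ∣ (m + i) ∧ 0 < a i) ∧
      (∀ i ∈ Finset.Icc 1 n, ∀ j ∈ Finset.Icc 1 n, i ≠ j →
        Nat.Coprime (a i) (a j)) := by
  have hC : Nat.choose (m + n) n ≠ 0 := (Nat.choose_pos (Nat.le_add_left n m)).ne'
  choose! F hFs hF using fun p (hp : p ∈ (Nat.choose (m + n) n).primeFactors) =>
    Nat.exists_mem_Icc_pow_factorization_choose_dvd hp
  obtain ⟨a, hprod, hdvd, hpos, hcop⟩ := Nat.exists_prod_eq_of_pow_factorization_dvd hC F hFs hF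
  exact ⟨a, hprod, fun i hi => ⟨hdvd i hi, hpos i⟩, fun i _ j _ hij => hcop hij⟩

/-- Every binomial coefficient `C(m+n, n)` can be written as a product of pairwise
coprime positive integers `a_1, ..., a_n` with `a_i ∣ m+i` (the `a_i` may be `1`). -/
theorem choose_eq_prod_coprime_divisors
    (m n : ℕ) (hm : 0 < m) (hn : 0 < n) :
    ∃ a : ℕ → ℕ,
      Nat.choose (m + n) n = ∏ i ∈ Finset.Icc 1 n, a i ∧
      (∀ i ∈ Finset.Icc 1 n, a i ∣ (m + i) ∧ 0 < a i) ∧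
      (∀ i ∈ Finset.Icc 1 n, ∀ j ∈ Finset.Icc 1 n, i ≠ j →
        Nat.Coprime (a i) (a j)) :=
  choose_eq_prod_coprime_divisors_general m n
end

section
/- For every integer n ≥ 2, the set H_n is finite and its cardinality equals ∏_{p ≤ n, p prime} (1 + ⌊log_p n⌋) − 1 − π(n). -/
/-!
For a prime `p` and `x ≠ 0`, the condition `p ∣ x → p ^ v_p(x) ≤ n` says exactly
`v_p(x) ≤ ⌊log_p n⌋`. So the positive integers satisfying it for every prime are the divisors of
`L = ∏_{p ≤ n} p ^ ⌊log_p n⌋ = lcm(1, …, n)`, and `H_n` is obtained from them by removing `1` and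
the primes `p ≤ n`. Counting divisors through the factorization of `L` gives
`∏_{p ≤ n} (1 + ⌊log_p n⌋)`.
-/

open Finset

lemma Nat.Prime.factorization_le_log_iff {p x : ℕ} (hp : p.Prime) (hx : x ≠ 0) (n : ℕ) :
    x.factorization p ≤ Nat.log p n ↔ (p ∣ x → p ^ x.factorization p ≤ n) := by
  by_cases hpx : p ∣ x
  · have hpos : 1 ≤ x.factorization p := (hp.dvd_iff_one_le_factorization hx).mp hpx
    simp only [hpx, forall_const]
    refine ⟨fun h ↦ Nat.pow_le_of_le_log ?_ h, Nat.le_log_of_pow_le hp.one_lt⟩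
    rintro rfl
    simp only [Nat.log_zero_right] at h
    omega
  · simp [Nat.factorization_eq_zero_of_not_dvd hpx, hpx]

namespace Hset

def prodMaxPrimePowers (n : ℕ) : ℕ :=
  ∏ p ∈ Nat.primesLE n, p ^ Nat.log p n

lemma prodMaxPrimePowers_ne_zero (n : ℕ) : prodMaxPrimePowers n ≠ 0 :=
  prod_ne_zero_iff.mpr fun _ hp ↦ pow_ne_zero _ (Nat.prime_of_mem_primesLE hp).ne_zero

lemma factorization_prodMaxPrimePowers (n : ℕ) {p : ℕ} (hp : p.Prime) :
    (prodMaxPrimePowers n).factorization p = Nat.log p n := by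
  rw [prodMaxPrimePowers,
    Nat.factorization_prod fun q hq ↦ pow_ne_zero _ (Nat.prime_of_mem_primesLE hq).ne_zero,
    sum_apply', sum_congr rfl fun q hq ↦ by
      rw [(Nat.prime_of_mem_primesLE hq).factorization_pow, Finsupp.single_apply],
    sum_ite_eq']
  split_ifs with h
  · rfl
  · exact (Nat.log_of_lt (by simpa [Nat.mem_primesLE, hp] using h)).symm

lemma primeFactors_prodMaxPrimePowers (n : ℕ) :
    (prodMaxPrimePowers n).primeFactors = Nat.primesLE n := by
  ext p
  by_cases hp : p.Prime
  · rw [← Nat.support_factorization, Finsupp.mem_support_iff,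
      factorization_prodMaxPrimePowers n hp, ← Nat.pos_iff_ne_zero, Nat.log_pos_iff,
      Nat.mem_primesLE]
    simp [hp, hp.one_lt]
  · simp [Nat.mem_primeFactors, Nat.mem_primesLE, hp]

lemma dvd_prodMaxPrimePowers_iff {n x : ℕ} :
    x ∣ prodMaxPrimePowers n ↔ x ≠ 0 ∧ ∀ p, p.Prime → p ∣ x → p ^ x.factorization p ≤ n := by
  have hL := prodMaxPrimePowers_ne_zero n
  constructor
  · intro h
    have hx := ne_zero_of_dvd_ne_zero hL h
    refine ⟨hx, fun p hp ↦ ?_⟩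
    rw [← hp.factorization_le_log_iff hx, ← factorization_prodMaxPrimePowers n hp]
    exact (Nat.factorization_le_iff_dvd hx hL).mpr h p
  · rintro ⟨hx, h⟩
    rw [← Nat.factorization_le_iff_dvd hx hL]
    intro p
    by_cases hp : p.Prime
    · rw [factorization_prodMaxPrimePowers n hp, hp.factorization_le_log_iff hx]
      exact h p hp
    · simp [Nat.factorization_eq_zero_of_not_prime x hp]

lemma card_divisors_prodMaxPrimePowers (n : ℕ) :
    #(prodMaxPrimePowers n).divisors = ∏ p ∈ Nat.primesLE n, (Nat.log p n + 1) := by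
  rw [Nat.card_divisors (prodMaxPrimePowers_ne_zero n), primeFactors_prodMaxPrimePowers]
  exact prod_congr rfl fun p hp ↦ by
    rw [factorization_prodMaxPrimePowers n (Nat.prime_of_mem_primesLE hp)]

lemma insert_one_primesLE_subset_divisors (n : ℕ) :
    insert 1 (Nat.primesLE n) ⊆ (prodMaxPrimePowers n).divisors := by
  refine insert_subset (Nat.one_mem_divisors.mpr (prodMaxPrimePowers_ne_zero n)) ?_
  rw [← primeFactors_prodMaxPrimePowers]
  exact fun p hp ↦ Nat.mem_divisors.mpr
    ⟨Nat.dvd_of_mem_primeFactors hp, prodMaxPrimePowers_ne_zero n⟩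

lemma eq_divisors_sdiff (n : ℕ) :
    Hset n = ↑((prodMaxPrimePowers n).divisors \ insert 1 (Nat.primesLE n)) := by
  ext x
  simp only [Hset, Set.mem_ofPred_eq, coe_sdiff, Set.mem_sdiff, mem_coe, Nat.mem_divisors,
    dvd_prodMaxPrimePowers_iff, mem_insert, Nat.mem_primesLE, not_or, not_and]
  constructor
  · rintro ⟨hx1, hxp, h⟩
    exact ⟨⟨⟨by omega, h⟩, prodMaxPrimePowers_ne_zero n⟩, by omega, fun _ ↦ hxp⟩
  · rintro ⟨⟨⟨hx0, h⟩, -⟩, hx1, hxp⟩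
    refine ⟨by omega, fun hp ↦ hxp ?_ hp, h⟩
    simpa [hp.factorization_self] using h x hp dvd_rfl

end Hset

theorem Hset_finite_card_general (n : ℕ) :
    (Hset n).Finite ∧
    (Hset n).ncard =
      (∏ p ∈ Finset.filter Nat.Prime (Finset.range (n + 1)),
        (1 + ⌊Real.logb (p : ℝ) (n : ℝ)⌋₊)) - 1 - Nat.primeCounting n := by
  rw [Hset.eq_divisors_sdiff]
  refine ⟨finite_toSet _, ?_⟩
  rw [Set.ncard_coe_finset, card_sdiff_of_subset (Hset.insert_one_primesLE_subset_divisors n),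
    card_insert_of_notMem (by simp [Nat.mem_primesLE, Nat.not_prime_one]),
    Nat.primesLE_card_eq_primeCounting, Hset.card_divisors_prodMaxPrimePowers,
    ← Nat.primesLE_eq_filter_range]
  simp_rw [Real.natFloor_logb_natCast, add_comm 1]
  omega

/-- For `n ≥ 2`, `H_n` is finite with cardinality
`∏_{p ≤ n, p prime} (1 + ⌊log_p n⌋) − 1 − π(n)`. -/
theorem Hset_finite_card (n : ℕ) (hn : 2 ≤ n) :
    (Hset n).Finite ∧
    (Hset n).ncard =
      (∏ p ∈ Finset.filter Nat.Prime (Finset.range (n + 1)),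
        (1 + ⌊Real.logb (p : ℝ) (n : ℝ)⌋₊)) - 1 - Nat.primeCounting n :=
  Hset_finite_card_general n
end

section
/- There exist a constant c > 0 and an integer M such that for every integer m ≥ M and every integer n with 1 ≤ n ≤ c · log m, the binomial coefficient C(m+n, n) admits a Grimm factorization. (In particular, the largest n for which C(m+n, n) admits a Grimm factorization satisfies w(m) ≫ log m.) -/
/-!
Put `C = C(m+n, n)`. Kummer's theorem bounds `v_p(C)` by `max_{1 ≤ j ≤ n} v_p(m+j)`: a carry at
level `k` puts a multiple of `p^k` into `(m, m+n]`. Sending every prime `p` to an index `σ p`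
maximising `v_p(m+j)` and grouping the prime powers `p^{v_p(C)}` by their index yields pairwise
coprime `a_i ∣ m+i` with product `C`, and it only remains to show that every index `i` receives a
prime.

As `n ≤ (log m)/8` gives `m+i ≥ 2^{8n}`, while the prime-power components of `m+i` that are at
most `n` multiply to at most `n^{√n} 4^n` and `i C(n,i) ≤ n 2^n`, some prime `q` satisfies both
`q^{v_q(m+i)} > n` and `v_q(m+i) > v_q(i C(n,i))`. The first makes `i` the unique maximiser of `v_q(m+j)`, so `σ q = i`;
the second, together with `m+i ∣ C · i C(n,i)`, gives `q ∣ C`.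
-/

open Finset

namespace Nat

theorem prod_pow_dvd_of_pow_dvd {s : Finset ℕ} (f : ℕ → ℕ) {N : ℕ}
    (hs : ∀ p ∈ s, p.Prime) (h : ∀ p ∈ s, p ^ f p ∣ N) : ∏ p ∈ s, p ^ f p ∣ N := by
  induction s using Finset.induction_on with
  | empty => simp
  | insert p s hp ih =>
    rw [prod_insert hp]
    have hcop : Coprime (p ^ f p) (∏ r ∈ s, r ^ f r) :=
      Coprime.prod_right fun r hr => Coprime.pow _ _ <|
        (coprime_primes (hs p (mem_insert_self p s)) (hs r (mem_insert_of_mem hr))).mpr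
          fun h => hp (h ▸ hr)
    exact hcop.mul_dvd_of_dvd_of_dvd (h p (mem_insert_self p s))
      (ih (fun r hr => hs r (mem_insert_of_mem hr)) fun r hr => h r (mem_insert_of_mem hr))

theorem add_dvd_choose_mul (m n i : ℕ) : m + i ∣ (m + n).choose n * (i * n.choose i) := by
  obtain _ | k := i
  · simp
  have hsplit : (m + n).choose n * n.choose (k + 1)
      = (m + n).choose (m + (k + 1)) * (m + (k + 1)).choose (k + 1) := by
    have := choose_mul (n := m + n) (k := m + (k + 1)) (s := m) (by omega)
    rwa [Nat.add_sub_cancel_left, Nat.add_sub_cancel_left, choose_symm_add, choose_symm_add,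
      eq_comm] at this
  have hpascal : (m + (k + 1)).choose (k + 1) * (k + 1) = (m + (k + 1)) * (m + k).choose k :=
    (add_one_mul_choose_eq (m + k) k).symm
  refine ⟨(m + n).choose (m + (k + 1)) * (m + k).choose k, ?_⟩
  calc (m + n).choose n * ((k + 1) * n.choose (k + 1))
      = (m + n).choose n * n.choose (k + 1) * (k + 1) := by ring
    _ = (m + n).choose (m + (k + 1)) * ((m + (k + 1)).choose (k + 1) * (k + 1)) := by
        rw [hsplit, mul_assoc]
    _ = (m + (k + 1)) * ((m + n).choose (m + (k + 1)) * (m + k).choose k) := by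
        rw [hpascal]; ring

theorem dvd_add_choose_of_factorization_lt {q m n i : ℕ} (hi : 0 < i) (hin : i ≤ n)
    (h : (i * n.choose i).factorization q < (m + i).factorization q) :
    q ∣ (m + n).choose n := by
  have hC : (m + n).choose n ≠ 0 := (choose_pos (le_add_left n m)).ne'
  have hK : i * n.choose i ≠ 0 := mul_ne_zero hi.ne' (choose_pos hin).ne'
  have hle := factorization_le_factorization_of_dvd_right (a := q) (add_dvd_choose_mul m n i)
    (by omega) (mul_ne_zero hC hK)
  rw [factorization_mul hC hK, Finsupp.add_apply] at hle
  exact dvd_of_factorization_pos (by omega)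

theorem factorization_add_choose_le {p m n i : ℕ} (hp : p.Prime)
    (hmax : ∀ j ∈ Icc 1 n, (m + j).factorization p ≤ (m + i).factorization p) :
    ((m + n).choose n).factorization p ≤ (m + i).factorization p := by
  rw [factorization_choose' hp (lt_add_one _)]
  calc #{k ∈ Ico 1 (log p (m + n) + 1) | p ^ k ≤ n % p ^ k + m % p ^ k}
      ≤ #(Ico 1 ((m + i).factorization p + 1)) := by
        refine card_le_card fun k hk => ?_
        rw [mem_filter, mem_Ico] at hk
        obtain ⟨⟨hk1, -⟩, hcarry⟩ := hk
        -- a carry at level `k` means that the first multiple of `p ^ k` after `m` is `≤ m + n`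
        have hpk : 0 < p ^ k := pow_pos hp.pos k
        have hj : p ^ k - m % p ^ k ∈ Icc 1 n := by
          have := mod_lt m hpk
          have := mod_le n (p ^ k)
          rw [mem_Icc]; omega
        have hdvd : p ^ k ∣ m + (p ^ k - m % p ^ k) := by
          have : m + (p ^ k - m % p ^ k) = m - m % p ^ k + p ^ k := by
            have := mod_lt m hpk
            have := mod_le m (p ^ k)
            omega
          exact this ▸ (dvd_sub_mod m).add dvd_rfl
        have := (hp.pow_dvd_iff_le_factorization (by rw [mem_Icc] at hj; omega)).mp hdvd
        have := hmax _ hj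
        rw [mem_Ico]; omega
    _ = (m + i).factorization p := by simp

theorem factorization_add_lt_of_lt_pow {p m n i j : ℕ} (hij : i ≠ j) (hi : i ≤ n) (hj : j ≤ n)
    (hn : n < p ^ (m + i).factorization p) :
    (m + j).factorization p < (m + i).factorization p := by
  by_contra! hle
  have hi' : p ^ (m + i).factorization p ∣ m + i := ordProj_dvd _ _
  have hj' : p ^ (m + i).factorization p ∣ m + j := (pow_dvd_pow p hle).trans (ordProj_dvd _ _)
  have hdiff : p ^ (m + i).factorization p ∣ max i j - min i j := by
    rcases le_total i j with h | h
    · simpa [h, Nat.add_sub_add_left] using Nat.dvd_sub hj' hi'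
    · simpa [h, Nat.add_sub_add_left] using Nat.dvd_sub hi' hj'
  have := le_of_dvd (by omega) hdiff
  omega

def smallPrimePowerPart (n N : ℕ) : ℕ :=
  ∏ p ∈ N.primeFactors with p ^ N.factorization p ≤ n, p ^ N.factorization p

theorem le_smallPrimePowerPart_mul {n N K : ℕ} (hN : N ≠ 0) (hK : K ≠ 0)
    (h : ∀ p, p.Prime → n < p ^ N.factorization p → N.factorization p ≤ K.factorization p) :
    N ≤ smallPrimePowerPart n N * K := by
  have hlarge : ∏ p ∈ N.primeFactors with ¬ p ^ N.factorization p ≤ n, p ^ N.factorization p ∣ K :=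
    prod_pow_dvd_of_pow_dvd _ (fun p hp => prime_of_mem_primeFactors (mem_filter.mp hp).1)
      fun p hp => by
        rw [mem_filter] at hp
        exact (pow_dvd_pow p (h p (prime_of_mem_primeFactors hp.1) (not_le.mp hp.2))).trans
          (ordProj_dvd K p)
  calc N = smallPrimePowerPart n N *
        ∏ p ∈ N.primeFactors with ¬ p ^ N.factorization p ≤ n, p ^ N.factorization p := by
        rw [smallPrimePowerPart, prod_filter_mul_prod_filter_not,
          ← prod_primeFactors_pow_factorization hN]
    _ ≤ smallPrimePowerPart n N * K := Nat.mul_le_mul_left _ (le_of_dvd (pos_of_ne_zero hK) hlarge)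

theorem prod_pow_le_pow_sqrt {n : ℕ} {s : Finset ℕ} (f : ℕ → ℕ)
    (hs : ∀ p ∈ s, 0 < p ∧ p * p ≤ n ∧ p ^ f p ≤ n) : ∏ p ∈ s, p ^ f p ≤ n ^ sqrt n := by
  have hcard : #s ≤ sqrt n :=
    (card_le_card fun p hp => mem_Icc.mpr ⟨(hs p hp).1, le_sqrt.mpr (hs p hp).2.1⟩).trans
      (card_Icc 1 (sqrt n)).le
  calc ∏ p ∈ s, p ^ f p ≤ n ^ #s := prod_le_pow_card _ _ _ fun p hp => (hs p hp).2.2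
    _ ≤ n ^ sqrt n := by
      rcases n.eq_zero_or_pos with rfl | hn
      · rw [sqrt_zero, Nat.le_zero] at hcard
        rw [hcard, sqrt_zero]
      · exact Nat.pow_le_pow_right hn hcard

theorem prod_pow_le_four_pow {n : ℕ} {s : Finset ℕ} (f : ℕ → ℕ)
    (hs : ∀ p ∈ s, p.Prime ∧ 0 < f p ∧ n < p * p ∧ p ^ f p ≤ n) : ∏ p ∈ s, p ^ f p ≤ 4 ^ n :=
  calc ∏ p ∈ s, p ^ f p = ∏ p ∈ s, p := prod_congr rfl fun p hp => by
        obtain ⟨hprime, hf, hsq, hpow⟩ := hs p hp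
        have : f p < 2 := (Nat.pow_lt_pow_iff_right hprime.one_lt).mp (by rw [sq]; omega)
        rw [show f p = 1 by omega, pow_one]
    _ ≤ primorial n := by
        refine prod_le_prod_of_subset_of_one_le' (fun p hp => ?_) fun p hp _ => ?_
        · obtain ⟨hprime, hf, -, hpow⟩ := hs p hp
          have : p ≤ p ^ f p := le_self_pow₀ hprime.one_le hf.ne'
          exact mem_filter.mpr ⟨mem_range.mpr (by omega), hprime⟩
        · exact (mem_filter.mp hp).2.one_le
    _ ≤ 4 ^ n := primorial_le_four_pow n

theorem smallPrimePowerPart_le (n N : ℕ) : smallPrimePowerPart n N ≤ n ^ sqrt n * 4 ^ n := by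
  rw [smallPrimePowerPart, ← prod_filter_mul_prod_filter_not _ (fun p => p * p ≤ n)]
  refine Nat.mul_le_mul (prod_pow_le_pow_sqrt _ fun p hp => ?_)
    (prod_pow_le_four_pow _ fun p hp => ?_)
  · simp only [mem_filter] at hp
    exact ⟨(prime_of_mem_primeFactors hp.1.1).pos, hp.2, hp.1.2⟩
  · simp only [mem_filter, not_le] at hp
    obtain ⟨⟨hpN, hpow⟩, hsq⟩ := hp
    obtain ⟨hprime, hdvd, hN⟩ := mem_primeFactors.mp hpN
    exact ⟨hprime, hprime.factorization_pos_of_dvd hN hdvd, hsq, hpow⟩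

theorem pow_sqrt_add_one_lt (n : ℕ) : n ^ (sqrt n + 1) < 16 ^ n := by
  have hsq : n < 4 ^ sqrt n := calc
    n < (sqrt n + 1) ^ 2 := lt_succ_sqrt' n
    _ ≤ (2 ^ sqrt n) ^ 2 := Nat.pow_le_pow_left Nat.lt_two_pow_self 2
    _ = 4 ^ sqrt n := by rw [← pow_mul, mul_comm, pow_mul]; norm_num
  calc n ^ (sqrt n + 1) < (4 ^ sqrt n) ^ (sqrt n + 1) := Nat.pow_lt_pow_left hsq (by omega)
    _ ≤ 4 ^ (2 * n) := by
        rw [← pow_mul]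
        refine Nat.pow_le_pow_right (by norm_num) ?_
        nlinarith [sqrt_le n, sqrt_le_self n]
    _ = 16 ^ n := by rw [pow_mul]; norm_num

theorem exists_prime_lt_pow_factorization_add {m n i : ℕ} (hi1 : 1 ≤ i) (hin : i ≤ n)
    (hm : 2 ^ (8 * n) ≤ m) :
    ∃ q, q.Prime ∧ n < q ^ (m + i).factorization q ∧
      (i * n.choose i).factorization q < (m + i).factorization q := by
  by_contra! h
  have : m + i < 2 ^ (8 * n) := calc
    m + i ≤ smallPrimePowerPart n (m + i) * (i * n.choose i) :=
        le_smallPrimePowerPart_mul (by omega) (mul_ne_zero (by omega) (choose_pos hin).ne') h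
    _ ≤ n ^ sqrt n * 4 ^ n * (n * 2 ^ n) :=
        Nat.mul_le_mul (smallPrimePowerPart_le n _) (Nat.mul_le_mul hin (choose_le_two_pow n i))
    _ = n ^ (sqrt n + 1) * (4 ^ n * 2 ^ n) := by ring
    _ < 16 ^ n * (4 ^ n * 2 ^ n) :=
        Nat.mul_lt_mul_of_pos_right (pow_sqrt_add_one_lt n) (by positivity)
    _ = (2 ^ 7) ^ n := by rw [← mul_pow, ← mul_pow]; norm_num
    _ = 2 ^ (7 * n) := (pow_mul 2 7 n).symm
    _ ≤ 2 ^ (8 * n) := Nat.pow_le_pow_right (by norm_num) (by omega)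
  omega

theorem exists_grimm_factorization_of_assignment {C : ℕ} (hC : C ≠ 0) {s : Finset ℕ}
    (N σ : ℕ → ℕ) (hσs : ∀ p, σ p ∈ s)
    (hσN : ∀ p, p.Prime → C.factorization p ≤ (N (σ p)).factorization p)
    (hσsurj : ∀ i ∈ s, ∃ p, p.Prime ∧ p ∣ C ∧ σ p = i) :
    ∃ a : ℕ → ℕ, C = ∏ i ∈ s, a i ∧ (∀ i ∈ s, a i ∣ N i ∧ 1 < a i) ∧
      ∀ i ∈ s, ∀ j ∈ s, i ≠ j → Coprime (a i) (a j) := by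
  refine ⟨fun i => ∏ p ∈ C.primeFactors with σ p = i, p ^ C.factorization p, ?_, ?_, ?_⟩
  · rw [prod_fiberwise_of_maps_to fun p _ => hσs p]
    exact prod_primeFactors_pow_factorization hC
  · intro i hi
    refine ⟨prod_pow_dvd_of_pow_dvd _ (fun p hp => prime_of_mem_primeFactors (mem_filter.mp hp).1)
      fun p hp => ?_, ?_⟩
    · obtain ⟨hpC, rfl⟩ := mem_filter.mp hp
      exact (pow_dvd_pow p (hσN p (prime_of_mem_primeFactors hpC))).trans (ordProj_dvd _ p)
    · obtain ⟨p, hp, hpC, rfl⟩ := hσsurj i hi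
      have hmem : p ∈ {r ∈ C.primeFactors | σ r = σ p} :=
        mem_filter.mpr ⟨mem_primeFactors.mpr ⟨hp, hpC, hC⟩, rfl⟩
      calc 1 < p ^ C.factorization p :=
            Nat.one_lt_pow (hp.factorization_pos_of_dvd hC hpC).ne' hp.one_lt
        _ ≤ ∏ r ∈ C.primeFactors with σ r = σ p, r ^ C.factorization r :=
          single_le_prod' (f := fun r => r ^ C.factorization r)
            (fun r hr => pow_pos (prime_of_mem_primeFactors (mem_filter.mp hr).1).pos _) hmem
  · intro i _ j _ hij
    refine Coprime.prod_left fun p hp => Coprime.prod_right fun r hr => ?_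
    obtain ⟨hpC, rfl⟩ := mem_filter.mp hp
    obtain ⟨hrC, rfl⟩ := mem_filter.mp hr
    exact Coprime.pow _ _ <| (coprime_primes (prime_of_mem_primeFactors hpC)
      (prime_of_mem_primeFactors hrC)).mpr fun h => hij (h ▸ rfl)

end Nat

theorem Real.two_pow_le_of_le_log {k m : ℕ} (hm : 0 < m) (h : (k : ℝ) ≤ Real.log m) :
    2 ^ k ≤ m := by
  have hexp : Real.exp k ≤ m := (Real.le_log_iff_exp_le (by exact_mod_cast hm)).mp h
  have h2 : (2 : ℝ) ^ k ≤ Real.exp k := by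
    rw [← Real.exp_one_pow]
    exact pow_le_pow_left₀ (by norm_num) (by linarith [Real.add_one_le_exp (1 : ℝ)]) k
  exact_mod_cast h2.trans hexp

/-- Lower bound `w(m) ≫ log m`: there are `c > 0` and `M` such that for every
`m ≥ M` and every `1 ≤ n ≤ c · log m`, the binomial coefficient `C(m+n, n)`
admits a Grimm factorization. -/
theorem grimm_factorization_log_lower_bound :
    ∃ c : ℝ, 0 < c ∧ ∃ M : ℕ, ∀ m : ℕ, M ≤ m → ∀ n : ℕ, 1 ≤ n →
      (n : ℝ) ≤ c * Real.log m →
      ∃ a : ℕ → ℕ,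
        Nat.choose (m + n) n = ∏ i ∈ Finset.Icc 1 n, a i ∧
        (∀ i ∈ Finset.Icc 1 n, a i ∣ (m + i) ∧ 1 < a i) ∧
        (∀ i ∈ Finset.Icc 1 n, ∀ j ∈ Finset.Icc 1 n, i ≠ j →
          Nat.Coprime (a i) (a j)) := by
  refine ⟨1 / 8, by norm_num, 1, fun m hm n hn hlog => ?_⟩
  have hm : 2 ^ (8 * n) ≤ m := Real.two_pow_le_of_le_log hm (by push_cast; linarith)
  choose σ hσs hσmax using fun p =>
    exists_max_image (Icc 1 n) (fun j => (m + j).factorization p) ⟨1, mem_Icc.mpr ⟨le_rfl, hn⟩⟩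
  refine Nat.exists_grimm_factorization_of_assignment (Nat.choose_pos (Nat.le_add_left n m)).ne'
    (fun i => m + i) σ hσs (fun p hp => Nat.factorization_add_choose_le hp (hσmax p))
    fun i hi => ?_
  obtain ⟨hi1, hin⟩ := mem_Icc.mp hi
  obtain ⟨q, hq, hlarge, hdominant⟩ := Nat.exists_prime_lt_pow_factorization_add hi1 hin hm
  refine ⟨q, hq, Nat.dvd_add_choose_of_factorization_lt hi1 hin hdominant, ?_⟩
  by_contra hne
  exact (Nat.factorization_add_lt_of_lt_pow (Ne.symm hne) hin (mem_Icc.mp (hσs q)).2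
    hlarge).not_ge (hσmax q i hi)
end

section
/- Assume Conjecture 1: there exists N such that for every n ≥ N and every positive integer m, if m+1, ..., m+n are all composite then ∏_{i=1}^n (m+i) = n! · ∏_{i=1}^n a_i for some positive integers a_1, ..., a_n with a_i dividing m+i, a_i > 1 for each i, and gcd(a_i, a_j) = 1 for all i ≠ j. Then there exists N' such that for every n ≥ N' and every divisor d > 1 of ∏_{n < p < 2n, p prime} p, if q denotes the least prime factor of d, then there is a prime in the open interval (d − q, d + q). -/
/-!
Let `q` be the least prime factor of a composite `d` as in the statement, and suppose there is no
prime in `(d - q, d + q)`. Then the `2q - 1` numbers `m + 1, …, m + (2q - 1)` with `m = d - q` are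
composite, and Conjecture 1 writes their product as `(2q - 1)! · ∏ aᵢ`. A prime factor `r` of
`a_q ∣ d` satisfies `q ≤ r < 2n < 2q`, so `r` divides both `(2q - 1)!` and `a_q`, hence `r²`
divides the product. Since `r ≥ q`, the only term of the product divisible by `r` is `m + q = d`,
so `r² ∣ d`, which contradicts `d` dividing a product of distinct primes.
-/

/-- **Conjecture 1.** For all sufficiently large `n`, the product of any `n`
consecutive composite numbers `m+1, ..., m+n` can be written as
`n! · a_1 ⋯ a_n` with `a_i ∣ m+i`, `a_i > 1`, and the `a_i` pairwise coprime. -/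
def Conjecture1 : Prop :=
  ∃ N : ℕ, ∀ n : ℕ, N ≤ n → ∀ m : ℕ, 0 < m →
    (∀ i ∈ Finset.Icc 1 n, 1 < m + i ∧ ¬ (m + i).Prime) →
    ∃ a : ℕ → ℕ,
      (∏ i ∈ Finset.Icc 1 n, (m + i)) =
        Nat.factorial n * ∏ i ∈ Finset.Icc 1 n, a i ∧
      (∀ i ∈ Finset.Icc 1 n, a i ∣ (m + i) ∧ 1 < a i) ∧
      (∀ i ∈ Finset.Icc 1 n, ∀ j ∈ Finset.Icc 1 n, i ≠ j →
        Nat.Coprime (a i) (a j))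

open Finset

theorem squarefree_prod_filter_prime (s : Finset ℕ) : Squarefree (∏ p ∈ s.filter Nat.Prime, p) :=
  Finset.squarefree_prod_of_pairwise_isCoprime
    (fun _ hp _ hq hpq => Nat.coprime_iff_isRelPrime.mp
      ((Nat.coprime_primes (mem_filter.mp hp).2 (mem_filter.mp hq).2).mpr hpq))
    (fun _ hp => (mem_filter.mp hp).2.prime.squarefree)

theorem mem_of_prime_dvd_of_dvd_prod_filter_prime {s : Finset ℕ} {d r : ℕ} (hr : r.Prime)
    (hrd : r ∣ d) (hd : d ∣ ∏ p ∈ s.filter Nat.Prime, p) : r ∈ s := by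
  have hP : (∏ p ∈ s.filter Nat.Prime, p) ≠ 0 :=
    prod_ne_zero_iff.mpr fun p hp => (mem_filter.mp hp).2.ne_zero
  have : r ∈ (∏ p ∈ s.filter Nat.Prime, p).primeFactors :=
    Nat.mem_primeFactors.mpr ⟨hr, hrd.trans hd, hP⟩
  rw [Nat.primeFactors_prod fun p hp => (mem_filter.mp hp).2] at this
  exact (mem_filter.mp this).1

theorem Nat.Prime.coprime_add_of_dvd_add {r m i k : ℕ} (hr : r.Prime) (hrk : r ∣ m + k)
    (hik : i ≠ k) (hi : i < k + r) (hk : k < i + r) : Nat.Coprime r (m + i) := by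
  rw [hr.coprime_iff_not_dvd]
  intro hri
  rcases hik.lt_or_gt with h | h
  · have := Nat.le_of_dvd (by omega) (Nat.dvd_sub hrk hri)
    omega
  · have := Nat.le_of_dvd (by omega) (Nat.dvd_sub hri hrk)
    omega

theorem sq_dvd_of_sq_dvd_prod_Icc {r m k n : ℕ} (hr : r.Prime) (hk : k ∈ Icc 1 n)
    (hkr : k ≤ r) (hnr : n < k + r) (hrk : r ∣ m + k)
    (h : r ^ 2 ∣ ∏ i ∈ Icc 1 n, (m + i)) : r ^ 2 ∣ m + k := by
  rw [← mul_prod_erase _ _ hk] at h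
  refine (Nat.Coprime.pow_left 2 (Nat.Coprime.prod_right fun i hi => ?_)).dvd_of_dvd_mul_right h
  obtain ⟨hik, hi⟩ := mem_erase.mp hi
  have := mem_Icc.mp hi
  exact hr.coprime_add_of_dvd_add hrk hik (by omega) (by omega)

theorem sq_dvd_of_dvd_factorial_mul_prod {ι : Type*} {s : Finset ι} {a : ι → ℕ} {x n r : ℕ}
    {k : ι} (hx : x = n.factorial * ∏ i ∈ s, a i) (hk : k ∈ s) (hr : 0 < r) (hrn : r ≤ n)
    (hra : r ∣ a k) : r ^ 2 ∣ x :=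
  hx ▸ sq r ▸ mul_dvd_mul (Nat.dvd_factorial hr hrn) (hra.trans (dvd_prod_of_mem a hk))

/-- Assuming Conjecture 1, for all sufficiently large `n`, every divisor `d > 1`
of `∏_{n < p < 2n} p` has a prime in the open interval `(d − q, d + q)`, where
`q` is the least prime factor of `d`. -/
theorem exists_prime_near_divisor_minFac_of_conjecture1 (hC : Conjecture1) :
    ∃ N' : ℕ, ∀ n : ℕ, N' ≤ n → ∀ d : ℕ, 1 < d →
      d ∣ (∏ p ∈ Finset.filter Nat.Prime (Finset.Ioo n (2 * n)), p) →
      ∃ p : ℕ, p.Prime ∧ d - d.minFac < p ∧ p < d + d.minFac := by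
  obtain ⟨N, hN⟩ := hC
  refine ⟨N + 1, fun n hn d hd hdvd => ?_⟩
  have hbounds : ∀ r, r.Prime → r ∣ d → n < r ∧ r < 2 * n := fun r hr hrd =>
    mem_Ioo.mp (mem_of_prime_dvd_of_dvd_prod_filter_prime hr hrd hdvd)
  set q := d.minFac
  have hq : q.Prime := Nat.minFac_prime (by omega)
  have hqn := hbounds q hq (Nat.minFac_dvd d)
  by_cases hdp : d.Prime
  · exact ⟨d, hdp, by omega, by omega⟩
  by_contra! hnone
  have hqd : q < d := (Nat.minFac_le (by omega)).lt_of_ne fun h => hdp (h ▸ hq)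
  have hqIcc : q ∈ Icc 1 (2 * q - 1) := mem_Icc.mpr ⟨by omega, by omega⟩
  obtain ⟨a, hprod, ha, -⟩ := hN (2 * q - 1) (by omega) (d - q) (by omega) fun i hi => by
    have := mem_Icc.mp hi
    exact ⟨by omega, fun hp => by have := hnone _ hp (by omega); omega⟩
  obtain ⟨haq, haq_one⟩ := ha q hqIcc
  rw [Nat.sub_add_cancel hqd.le] at haq
  have hr := Nat.minFac_prime haq_one.ne'
  have hrd := (Nat.minFac_dvd (a q)).trans haq
  have hqr : q ≤ (a q).minFac := Nat.minFac_le_of_dvd hr.two_le hrd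
  have hrn := hbounds _ hr hrd
  have hsq := sq_dvd_of_sq_dvd_prod_Icc hr hqIcc hqr (by omega)
    (by rwa [Nat.sub_add_cancel hqd.le])
    (sq_dvd_of_dvd_factorial_mul_prod hprod hqIcc hr.pos (by omega) (Nat.minFac_dvd _))
  rw [Nat.sub_add_cancel hqd.le, sq] at hsq
  exact Nat.squarefree_iff_prime_squarefree.mp
    ((squarefree_prod_filter_prime _).squarefree_of_dvd hdvd) _ hr hsq
end

section
/- Assume Conjecture 1: there exists N such that for every n ≥ N and every positive integer m, if m+1, ..., m+n are all composite then ∏_{i=1}^n (m+i) = n! · ∏_{i=1}^n a_i for some positive integers a_1, ..., a_n with a_i dividing m+i, a_i > 1 for each i, and gcd(a_i, a_j) = 1 for all i ≠ j. Then there exists N' such that for every n ≥ N' the following holds: if d > 1 is a divisor of ∏_{n/2 < p < n, p prime} p, and d = nt + r with t ≥ 1 and 1 ≤ r ≤ n, and gcd(d, nt + j) = 1 for every 1 ≤ j ≤ n with j ≠ r, then there is a prime in the interval [nt + 1, nt + n]. -/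
/-! Suppose `nt + 1, …, nt + n` are all composite and factor them by Conjecture 1. A prime factor
`q` of `a_r` divides `d`, hence lies in `(n/2, n)`, so `q ∣ n!` as well and `q²` divides the
product of the block. Since `d` is coprime to every other member of the block, `q² ∣ nt + r = d`,
which is impossible because `d` divides a product of distinct primes. -/

open Finset

lemma squarefree_prod_of_forall_prime {s : Finset ℕ} (hs : ∀ p ∈ s, p.Prime) :
    Squarefree (∏ p ∈ s, p) :=
  Finset.squarefree_prod_of_pairwise_isCoprime
    (fun p hp q hq hpq ↦ Nat.coprime_iff_isRelPrime.1 <|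
      (Nat.coprime_primes (hs p hp) (hs q hq)).2 hpq)
    fun p hp ↦ (hs p hp).squarefree

lemma mem_of_prime_dvd_prod_primes {s : Finset ℕ} (hs : ∀ p ∈ s, p.Prime) {q : ℕ}
    (hq : q.Prime) (h : q ∣ ∏ p ∈ s, p) : q ∈ s := by
  obtain ⟨p, hp, hqp⟩ := (hq.prime.dvd_finsetProd_iff _).1 h
  rwa [(Nat.prime_dvd_prime_iff_eq hq (hs p hp)).1 hqp]

lemma dvd_of_dvd_prod_of_coprime_of_ne {ι : Type*} [DecidableEq ι] {s : Finset ι}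
    {f : ι → ℕ} {k : ℕ} {i : ι} (hi : i ∈ s) (hk : ∀ j ∈ s, j ≠ i → Nat.Coprime k (f j))
    (h : k ∣ ∏ j ∈ s, f j) : k ∣ f i := by
  rw [← mul_prod_erase s f hi] at h
  exact (Nat.Coprime.prod_right fun j hj ↦
    hk j (mem_of_mem_erase hj) (ne_of_mem_erase hj)).dvd_of_dvd_mul_right h

lemma mul_self_dvd_of_prod_eq_factorial_mul_prod {n m r q : ℕ} {a : ℕ → ℕ}
    (hprod : ∏ i ∈ Icc 1 n, (m + i) = n.factorial * ∏ i ∈ Icc 1 n, a i)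
    (hr : r ∈ Icc 1 n) (hq : 0 < q) (hqn : q ≤ n) (hqa : q ∣ a r)
    (hcop : ∀ j ∈ Icc 1 n, j ≠ r → Nat.Coprime q (m + j)) : q * q ∣ m + r := by
  refine dvd_of_dvd_prod_of_coprime_of_ne hr
    (fun j hj hjr ↦ Nat.Coprime.mul_left (hcop j hj hjr) (hcop j hj hjr)) ?_
  rw [hprod]
  exact mul_dvd_mul (Nat.dvd_factorial hq hqn) (hqa.trans (dvd_prod_of_mem a hr))

/-- Assuming Conjecture 1, for all sufficiently large `n`: if `d > 1` divides
`∏_{n/2 < p < n} p`, `d = nt + r` with `t ≥ 1` and `1 ≤ r ≤ n`, and `d` is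
coprime to `nt + j` for every `1 ≤ j ≤ n` with `j ≠ r`, then there is a prime
in the interval `[nt + 1, nt + n]`. -/
theorem exists_prime_in_block_of_conjecture1 (hC : Conjecture1) :
    ∃ N' : ℕ, ∀ n : ℕ, N' ≤ n → ∀ d : ℕ, 1 < d →
      d ∣ (∏ p ∈ Finset.filter (fun p => p.Prime ∧ n < 2 * p) (Finset.range n), p) →
      ∀ t r : ℕ, 1 ≤ t → 1 ≤ r → r ≤ n → d = n * t + r →
      (∀ j ∈ Finset.Icc 1 n, j ≠ r → Nat.Coprime d (n * t + j)) →
      ∃ p : ℕ, p.Prime ∧ n * t + 1 ≤ p ∧ p ≤ n * t + n := by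
  obtain ⟨N, hN⟩ := hC
  refine ⟨max N 1, fun n hn d _ hdvd t r ht hr1 hrn hdr hcop ↦ ?_⟩
  by_contra! hnoprime
  have hm : 0 < n * t := by have := le_of_max_le_right hn; positivity
  have hcomposite : ∀ i ∈ Icc 1 n, 1 < n * t + i ∧ ¬ (n * t + i).Prime := fun i hi ↦ by
    rw [mem_Icc] at hi
    exact ⟨by omega, fun hp ↦ by have := hnoprime _ hp (by omega); omega⟩
  obtain ⟨a, hprod, hdiv, -⟩ := hN n (le_of_max_le_left hn) (n * t) hm hcomposite
  have hr : r ∈ Icc 1 n := mem_Icc.2 ⟨hr1, hrn⟩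
  have hS : ∀ p ∈ (range n).filter (fun p ↦ p.Prime ∧ n < 2 * p), p.Prime :=
    fun p hp ↦ (mem_filter.1 hp).2.1
  set q := (a r).minFac
  have hq : q.Prime := Nat.minFac_prime (hdiv r hr).2.ne'
  have hqd : q ∣ d := hdr ▸ (Nat.minFac_dvd _).trans (hdiv r hr).1
  have hqn : q < n :=
    mem_range.1 (mem_filter.1 (mem_of_prime_dvd_prod_primes hS hq (hqd.trans hdvd))).1
  have hqq : q * q ∣ d := hdr ▸ mul_self_dvd_of_prod_eq_factorial_mul_prod hprod hr hq.pos
    hqn.le (Nat.minFac_dvd _) fun j hj hjr ↦ (hcop j hj hjr).coprime_dvd_left hqd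
  exact hq.not_isUnit ((squarefree_prod_of_forall_prime hS).squarefree_of_dvd hdvd q hqq)
end
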